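/- Let P₁, P₂, P₃ be three affinely independent points in the Euclidean plane ℝ² such that all three interior angles of the triangle (∠P₂P₁P₃, ∠P₁P₂P₃, ∠P₁P₃P₂) are strictly less than 2π/3, and define f : ℝ² → ℝ by f(P) = dist(P, P₁) + dist(P, P₂) + dist(P, P₃). Then f has a unique global minimizer P₀; moreover P₀ lies in the interior of the convex hull of {P₁, P₂, P₃} and satisfies ∠P₁P₀P₂ = ∠P₂P₀P₃ = ∠P₃P₀P₁ = 2π/3. -/

import Mathlib

/-!
The sum of distances is coercive, so it has a global minimiser `P₀`. Write `u_X` for the unit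
vector from a point towards the vertex `X`. At a vertex `A`, the other two distances have gradient
`-(u_B + u_C)`, of norm `√(2 + 2 cos ∠BAC) > 1` when `∠BAC < 2π/3`; moving along `u_B + u_C` they
decrease faster than `dist · A` grows, so `P₀` is no vertex. There the gradient vanishes:
`u_A + u_B + u_C = 0`, which forces the three angles at `P₀` to be `2π/3` and writes `P₀` as a
combination of the vertices with positive weights `1 / dist P₀ X`. Finally `dist Q X ≥ ⟪u_X, X - Q⟫`,
and the right-hand sides add up to the minimum value; a second minimiser `Q` attains all three
bounds, so it lies on the lines `P₀ + ℝ u_A` and `P₀ + ℝ u_B`, which meet only at `P₀`.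
-/

open Real EuclideanGeometry

open Filter RealInnerProductSpace

theorem HasFDerivAt.neg_mul_norm_le_apply {E : Type*} [NormedAddCommGroup E] [NormedSpace ℝ E]
    {g : E → ℝ} {g' : E →L[ℝ] ℝ} {x : E} {c : ℝ} (hg : HasFDerivAt g g' x)
    (h : ∀ y, g x ≤ g y + c * ‖y - x‖) (v : E) : -(c * ‖v‖) ≤ g' v := by
  refine ge_of_tendsto (hg.lim v tendsto_norm_atTop_atTop) ?_
  filter_upwards [eventually_gt_atTop 0] with n hn
  have hy := h (x + n⁻¹ • v)
  rw [add_sub_cancel_left, norm_smul, norm_inv, Real.norm_of_nonneg hn.le] at hy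
  rw [smul_eq_mul]
  have := mul_le_mul_of_nonneg_left hy hn.le
  field_simp at this ⊢
  linarith

theorem exists_forall_dist_add_dist_add_dist_le {α : Type*} [MetricSpace α] [ProperSpace α]
    (A B C : α) : ∃ P, ∀ Q, dist P A + dist P B + dist P C ≤ dist Q A + dist Q B + dist Q C := by
  have : Nonempty α := ⟨A⟩
  refine Continuous.exists_forall_le (by fun_prop) ?_
  refine tendsto_atTop_mono (fun P => ?_) (tendsto_dist_right_cocompact_atTop A)
  linarith [dist_nonneg (x := P) (y := B), dist_nonneg (x := P) (y := C)]

theorem AffineBasis.mem_interior_convexHull_of_sum_smul_sub_eq_zero {ι E : Type*} [Fintype ι]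
    [NormedAddCommGroup E] [NormedSpace ℝ E] (b : AffineBasis ι ℝ E) {x : E} {c : ι → ℝ}
    (hc : ∀ i, 0 < c i) (h : ∑ i, c i • (b i - x) = 0) :
    x ∈ interior (convexHull ℝ (Set.range b)) := by
  have : Nonempty ι := b.nonempty
  set S := ∑ i, c i
  have hS : 0 < S := Finset.sum_pos (fun i _ => hc i) Finset.univ_nonempty
  have hw : ∑ i, S⁻¹ * c i = 1 := by rw [← Finset.mul_sum, inv_mul_cancel₀ hS.ne']
  have hsum : ∑ i, c i • b i = S • x := by
    simpa only [smul_sub, Finset.sum_sub_distrib, ← Finset.sum_smul, sub_eq_zero] using h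
  have hx : x = Finset.univ.affineCombination ℝ b (fun i => S⁻¹ * c i) := by
    rw [Finset.affineCombination_eq_linear_combination _ _ _ hw]
    calc x = S⁻¹ • ∑ i, c i • b i := by rw [hsum, smul_smul, inv_mul_cancel₀ hS.ne', one_smul]
      _ = _ := by rw [Finset.smul_sum]; simp only [smul_smul]
  rw [b.interior_convexHull]
  intro i
  rw [hx, b.coord_apply_combination_of_mem (Finset.mem_univ i) hw]
  exact mul_pos (inv_pos.2 hS) (hc i)

theorem mem_interior_convexHull_of_smul_sub_add_smul_sub_add_smul_sub_eq_zero {E : Type*}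
    [NormedAddCommGroup E] [NormedSpace ℝ E] [FiniteDimensional ℝ E]
    (hE : Module.finrank ℝ E = 2) {A B C x : E} (hind : AffineIndependent ℝ ![A, B, C])
    {a b c : ℝ} (ha : 0 < a) (hb : 0 < b) (hc : 0 < c)
    (h : a • (A - x) + b • (B - x) + c • (C - x) = 0) :
    x ∈ interior (convexHull ℝ {A, B, C}) := by
  have hspan : affineSpan ℝ (Set.range ![A, B, C]) = ⊤ := by
    rw [hind.affineSpan_eq_top_iff_card_eq_finrank_add_one, hE]
    rfl
  let basis : AffineBasis (Fin 3) ℝ E := ⟨_, hind, hspan⟩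
  have hbasis : ⇑basis = ![A, B, C] := rfl
  have hx := basis.mem_interior_convexHull_of_sum_smul_sub_eq_zero (c := ![a, b, c])
    (fun i => by fin_cases i <;> assumption) (by simpa [hbasis, Fin.sum_univ_three] using h)
  rwa [hbasis, Matrix.range_cons, Matrix.range_cons, Matrix.range_cons, Matrix.range_empty,
    Set.union_empty, Set.singleton_union, Set.singleton_union] at hx

theorem cos_two_pi_div_three : cos (2 * π / 3) = -(1 / 2) := by
  rw [show 2 * π / 3 = π - π / 3 by ring, cos_pi_sub, cos_pi_div_three]

section InnerProductSpace

variable {F : Type*} [NormedAddCommGroup F] [InnerProductSpace ℝ F]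

theorem hasFDerivAt_dist_const {x A : F} (hx : x ≠ A) :
    HasFDerivAt (fun y => dist y A) (innerSL ℝ (‖x - A‖⁻¹ • (x - A))) x := by
  have hsq := ((hasStrictFDerivAt_norm_sq (x - A)).hasFDerivAt.comp x
    ((hasFDerivAt_id x).sub_const A)).sqrt (by simpa [sub_eq_zero] using hx)
  simp only [Function.comp_def, id, sqrt_sq (norm_nonneg _)] at hsq
  simp only [dist_eq_norm]
  convert hsq using 1
  ext v
  simp only [map_smul, map_sub, smul_apply, sub_apply, coe_innerSL_apply, smul_eq_mul,
    ContinuousLinearMap.comp_id, nsmul_eq_mul, Nat.cast_ofNat]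
  field_simp

theorem norm_inv_norm_smul {x : F} (hx : x ≠ 0) : ‖‖x‖⁻¹ • x‖ = 1 := by
  simp [norm_smul, hx]

theorem inner_inv_norm_smul_inv_norm_smul (x y : F) :
    ⟪‖x‖⁻¹ • x, ‖y‖⁻¹ • y⟫ = cos (InnerProductGeometry.angle x y) := by
  rw [InnerProductGeometry.cos_angle, real_inner_smul_left, real_inner_smul_right, div_eq_inv_mul,
    mul_inv]
  ring

theorem norm_inv_norm_smul_add_inv_norm_smul_sq {x y : F} (hx : x ≠ 0) (hy : y ≠ 0) :
    ‖‖x‖⁻¹ • x + ‖y‖⁻¹ • y‖ ^ 2 = 2 + 2 * cos (InnerProductGeometry.angle x y) := by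
  rw [norm_add_sq_real, norm_inv_norm_smul hx, norm_inv_norm_smul hy,
    inner_inv_norm_smul_inv_norm_smul]
  ring

theorem angle_eq_two_pi_div_three_of_sum_eq_zero {x y z : F} (hx : x ≠ 0) (hy : y ≠ 0)
    (hz : z ≠ 0) (h : ‖x‖⁻¹ • x + ‖y‖⁻¹ • y + ‖z‖⁻¹ • z = 0) :
    InnerProductGeometry.angle x y = 2 * π / 3 := by
  have hxy := norm_inv_norm_smul_add_inv_norm_smul_sq hx hy
  rw [eq_neg_of_add_eq_zero_left h, norm_neg, norm_inv_norm_smul hz] at hxy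
  refine injOn_cos ⟨InnerProductGeometry.angle_nonneg x y, InnerProductGeometry.angle_le_pi x y⟩
    ⟨by positivity, by linarith [pi_pos]⟩ ?_
  rw [cos_two_pi_div_three]
  linarith

theorem angle_eq_two_pi_div_three_of_sum_inv_norm_smul_sub_eq_zero {A B C P : F} (hA : A ≠ P)
    (hB : B ≠ P) (hC : C ≠ P)
    (h : ‖A - P‖⁻¹ • (A - P) + ‖B - P‖⁻¹ • (B - P) + ‖C - P‖⁻¹ • (C - P) = 0) :
    ∠ A P B = 2 * π / 3 :=
  angle_eq_two_pi_div_three_of_sum_eq_zero (sub_ne_zero.2 hA) (sub_ne_zero.2 hB)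
    (sub_ne_zero.2 hC) h

theorem eq_zero_of_smul_eq_smul {u v : F} {a b : ℝ} (hu : ‖u‖ = 1) (hv : ‖v‖ = 1)
    (huv : |⟪u, v⟫| < 1) (h : a • u = b • v) : a = 0 := by
  have h₁ := congrArg (⟪u, ·⟫) h
  have h₂ := congrArg (⟪v, ·⟫) h
  simp only [real_inner_smul_right, real_inner_self_eq_norm_sq, hu, hv] at h₁ h₂
  rw [real_inner_comm] at h₂
  have : a * (1 - ⟪u, v⟫ ^ 2) = 0 := by linear_combination h₁ - ⟪u, v⟫ * h₂
  have : 0 < 1 - ⟪u, v⟫ ^ 2 := by nlinarith [abs_lt.1 huv]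
  nlinarith

theorem ne_of_forall_dist_add_dist_add_dist_le_of_angle_lt {A B C P : F} (hB : B ≠ A)
    (hC : C ≠ A) (h : ∠ B A C < 2 * π / 3)
    (hmin : ∀ Q, dist P A + dist P B + dist P C ≤ dist Q A + dist Q B + dist Q C) : A ≠ P := by
  rintro rfl
  set s := ‖A - B‖⁻¹ • (A - B) + ‖A - C‖⁻¹ • (A - C)
  have hg : HasFDerivAt (fun y => dist y B + dist y C) (innerSL ℝ s) A := by
    rw [map_add]
    exact (hasFDerivAt_dist_const hB.symm).add (hasFDerivAt_dist_const hC.symm)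
  have hle := hg.neg_mul_norm_le_apply (c := 1) (fun Q => by
    rw [one_mul, ← dist_eq_norm]; linarith [hmin Q, dist_self A]) (-s)
  rw [innerSL_apply_apply, inner_neg_right, real_inner_self_eq_norm_sq, norm_neg, one_mul] at hle
  have hs : ‖s‖ ^ 2 = 2 + 2 * cos (∠ B A C) := by
    rw [norm_inv_norm_smul_add_inv_norm_smul_sq (sub_ne_zero.2 hB.symm) (sub_ne_zero.2 hC.symm),
      EuclideanGeometry.angle, ← InnerProductGeometry.angle_neg_neg, neg_sub, neg_sub,
      vsub_eq_sub, vsub_eq_sub]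
  have : cos (2 * π / 3) < cos (∠ B A C) :=
    strictAntiOn_cos ⟨angle_nonneg _ _ _, angle_le_pi _ _ _⟩ ⟨by positivity, by linarith [pi_pos]⟩ h
  rw [cos_two_pi_div_three] at this
  nlinarith [norm_nonneg s]

theorem sum_inv_norm_smul_sub_eq_zero_of_forall_le {A B C P : F} (hA : A ≠ P) (hB : B ≠ P)
    (hC : C ≠ P)
    (hmin : ∀ Q, dist P A + dist P B + dist P C ≤ dist Q A + dist Q B + dist Q C) :
    ‖A - P‖⁻¹ • (A - P) + ‖B - P‖⁻¹ • (B - P) + ‖C - P‖⁻¹ • (C - P) = 0 := by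
  have hf := ((hasFDerivAt_dist_const hA.symm).add (hasFDerivAt_dist_const hB.symm)).add
    (hasFDerivAt_dist_const hC.symm)
  rw [← map_add, ← map_add] at hf
  have h0 := IsLocalMin.hasFDerivAt_eq_zero (.of_forall hmin) hf
  rw [← norm_eq_zero, innerSL_apply_norm, norm_eq_zero] at h0
  rw [← neg_eq_zero, ← h0]
  simp only [← neg_sub P, norm_neg, smul_neg, neg_add, neg_neg]

theorem inner_inv_norm_smul_sub_eq {X P : F} (hX : X ≠ P) (Q : F) :
    ⟪‖X - P‖⁻¹ • (X - P), X - Q⟫ = dist P X + ⟪‖X - P‖⁻¹ • (X - P), P - Q⟫ := by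
  have hXP : ‖X - P‖ ≠ 0 := norm_ne_zero_iff.2 (sub_ne_zero.2 hX)
  rw [← sub_add_sub_cancel X P Q, inner_add_right, real_inner_smul_left,
    real_inner_self_eq_norm_sq, dist_eq_norm']
  field_simp

theorem sub_eq_smul_of_inner_inv_norm_smul_sub_eq {X P Q : F} (hX : X ≠ P)
    (h : ⟪‖X - P‖⁻¹ • (X - P), X - Q⟫ = dist Q X) :
    Q - P = (dist P X - dist Q X) • (‖X - P‖⁻¹ • (X - P)) := by
  have hu := norm_inv_norm_smul (sub_ne_zero.2 hX)
  rw [dist_eq_norm', ← one_mul ‖X - Q‖, ← hu, inner_eq_norm_mul_iff_real, hu, one_smul] at h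
  rw [sub_smul, dist_eq_norm' P X, dist_eq_norm' Q X, h, smul_smul,
    mul_inv_cancel₀ (norm_ne_zero_iff.2 (sub_ne_zero.2 hX)), one_smul]
  abel

theorem eq_of_sum_dist_le_of_sum_inv_norm_smul_sub_eq_zero {A B C P Q : F} (hA : A ≠ P)
    (hB : B ≠ P) (hC : C ≠ P)
    (hP : ‖A - P‖⁻¹ • (A - P) + ‖B - P‖⁻¹ • (B - P) + ‖C - P‖⁻¹ • (C - P) = 0)
    (hQ : dist Q A + dist Q B + dist Q C ≤ dist P A + dist P B + dist P C) : Q = P := by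
  have hlin : ∀ X, X ≠ P → ⟪‖X - P‖⁻¹ • (X - P), X - Q⟫ ≤ dist Q X := fun X hX => by
    rw [dist_eq_norm']
    exact (real_inner_le_norm _ _).trans_eq (by rw [norm_inv_norm_smul (sub_ne_zero.2 hX), one_mul])
  have hsum : ⟪‖A - P‖⁻¹ • (A - P), P - Q⟫ + ⟪‖B - P‖⁻¹ • (B - P), P - Q⟫
      + ⟪‖C - P‖⁻¹ • (C - P), P - Q⟫ = 0 := by
    rw [← inner_add_left, ← inner_add_left, hP, inner_zero_left]
  have hlinA := hlin A hA
  have hlinB := hlin B hB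
  have hlinC := hlin C hC
  have hexpA := inner_inv_norm_smul_sub_eq hA Q
  have hexpB := inner_inv_norm_smul_sub_eq hB Q
  have hexpC := inner_inv_norm_smul_sub_eq hC Q
  have eA := sub_eq_smul_of_inner_inv_norm_smul_sub_eq hA (by linarith : _ = dist Q A)
  have eB := sub_eq_smul_of_inner_inv_norm_smul_sub_eq hB (by linarith : _ = dist Q B)
  have hAB : |⟪‖A - P‖⁻¹ • (A - P), ‖B - P‖⁻¹ • (B - P)⟫| < 1 := by
    rw [inner_inv_norm_smul_inv_norm_smul, angle_eq_two_pi_div_three_of_sum_eq_zero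
      (sub_ne_zero.2 hA) (sub_ne_zero.2 hB) (sub_ne_zero.2 hC) hP, cos_two_pi_div_three]
    norm_num
  rw [← sub_eq_zero, eA, eq_zero_of_smul_eq_smul (norm_inv_norm_smul (sub_ne_zero.2 hA))
    (norm_inv_norm_smul (sub_ne_zero.2 hB)) hAB (eA.symm.trans eB), zero_smul]

end InnerProductSpace

theorem fermat_point_interior_of_small_angles
    (P₁ P₂ P₃ : EuclideanSpace ℝ (Fin 2))
    (hind : AffineIndependent ℝ ![P₁, P₂, P₃])
    (h₁ : EuclideanGeometry.angle P₂ P₁ P₃ < 2 * π / 3)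
    (h₂ : EuclideanGeometry.angle P₁ P₂ P₃ < 2 * π / 3)
    (h₃ : EuclideanGeometry.angle P₁ P₃ P₂ < 2 * π / 3)
    (f : EuclideanSpace ℝ (Fin 2) → ℝ)
    (hf : ∀ P, f P = dist P P₁ + dist P P₂ + dist P P₃) :
    ∃ P₀ : EuclideanSpace ℝ (Fin 2),
      (∀ P, f P₀ ≤ f P) ∧
      (∀ Q, (∀ P, f Q ≤ f P) → Q = P₀) ∧
      P₀ ∈ interior (convexHull ℝ {P₁, P₂, P₃}) ∧
      EuclideanGeometry.angle P₁ P₀ P₂ = 2 * π / 3 ∧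
      EuclideanGeometry.angle P₂ P₀ P₃ = 2 * π / 3 ∧
      EuclideanGeometry.angle P₃ P₀ P₁ = 2 * π / 3 := by
  simp only [hf]
  have h₁₂ : P₁ ≠ P₂ := by simpa using hind.injective.ne (show (0 : Fin 3) ≠ 1 by decide)
  have h₁₃ : P₁ ≠ P₃ := by simpa using hind.injective.ne (show (0 : Fin 3) ≠ 2 by decide)
  have h₂₃ : P₂ ≠ P₃ := by simpa using hind.injective.ne (show (1 : Fin 3) ≠ 2 by decide)
  obtain ⟨P₀, hmin⟩ := exists_forall_dist_add_dist_add_dist_le P₁ P₂ P₃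
  have hne₁ : P₁ ≠ P₀ :=
    ne_of_forall_dist_add_dist_add_dist_le_of_angle_lt h₁₂.symm h₁₃.symm h₁ hmin
  have hne₂ : P₂ ≠ P₀ := ne_of_forall_dist_add_dist_add_dist_le_of_angle_lt h₁₂ h₂₃.symm h₂
    fun Q => by linarith [hmin Q]
  have hne₃ : P₃ ≠ P₀ := ne_of_forall_dist_add_dist_add_dist_le_of_angle_lt h₁₃ h₂₃ h₃
    fun Q => by linarith [hmin Q]
  have hstat := sum_inv_norm_smul_sub_eq_zero_of_forall_le hne₁ hne₂ hne₃ hmin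
  have hint := mem_interior_convexHull_of_smul_sub_add_smul_sub_add_smul_sub_eq_zero
    finrank_euclideanSpace_fin hind (inv_pos.2 (norm_pos_iff.2 (sub_ne_zero.2 hne₁)))
    (inv_pos.2 (norm_pos_iff.2 (sub_ne_zero.2 hne₂)))
    (inv_pos.2 (norm_pos_iff.2 (sub_ne_zero.2 hne₃))) hstat
  refine ⟨P₀, hmin, fun Q hQ => eq_of_sum_dist_le_of_sum_inv_norm_smul_sub_eq_zero hne₁ hne₂ hne₃
    hstat (hQ P₀), hint, ?_, ?_, ?_⟩
  · exact angle_eq_two_pi_div_three_of_sum_inv_norm_smul_sub_eq_zero hne₁ hne₂ hne₃ hstat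
  · exact angle_eq_two_pi_div_three_of_sum_inv_norm_smul_sub_eq_zero hne₂ hne₃ hne₁
      (by rw [← hstat]; abel)
  · exact angle_eq_two_pi_div_three_of_sum_inv_norm_smul_sub_eq_zero hne₃ hne₁ hne₂
      (by rw [← hstat]; abel)
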